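/- arXiv:2105.00958 — 3 statements merged into one kernel-verified Lean document; each statement's English description precedes it below -/
import Mathlib

section
/- Explicit fundamental solution of the effective Dirac ODE at zero momentum: Let ω > 0 and R, v_D ∈ ℝ. Define the 2×2 complex matrices L = [[ω/2, R v_D], [R v_D, −ω/2]] and, for T ∈ ℝ, P(T) = [[e^{iωT/2}, 0], [0, e^{−iωT/2}]] and D(T) = [[0, R v_D e^{iωT}], [R v_D e^{−iωT}, 0]]. Then the matrix-valued function U(T) = P(T) · exp(−i T L) satisfies U(0) = I and is differentiable with U′(T) = −i D(T) U(T) for every T ∈ ℝ; i.e., U is a fundamental solution of i U′(T) = D(T) U(T). -/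
/-!
Write `U(T) = exp(T • iK) · exp(T • (−iL))`, where `K = diag(ω/2, −ω/2)` is the diagonal part of
`L`, so that `P(T) = exp(T • iK)`. The product rule for the two exponentials gives
`U′(T) = i (K P(T) − P(T) L) exp(−iTL)`, and conjugating `L` by `P(T)` multiplies its
off-diagonal entries by `e^{±iωT}`, i.e. `P(T) L − K P(T) = D(T) P(T)`. Hence `U′ = −i D U`.
-/

open Matrix Complex

noncomputable section

/-- `L = [[ω/2, R v_D], [R v_D, −ω/2]]`. -/
def Lmat (ω R vD : ℝ) : Matrix (Fin 2) (Fin 2) ℂ :=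
  !![(ω : ℂ) / 2, (R : ℂ) * vD; (R : ℂ) * vD, -((ω : ℂ) / 2)]

/-- `P(T) = [[e^{iωT/2}, 0], [0, e^{−iωT/2}]]`. -/
def Pmat (ω : ℝ) (T : ℝ) : Matrix (Fin 2) (Fin 2) ℂ :=
  !![Complex.exp (Complex.I * ω * T / 2), 0;
     0, Complex.exp (-(Complex.I * ω * T / 2))]

/-- `D(T) = [[0, R v_D e^{iωT}], [R v_D e^{−iωT}, 0]]`. -/
def Dmat (ω R vD : ℝ) (T : ℝ) : Matrix (Fin 2) (Fin 2) ℂ :=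
  !![0, (R : ℂ) * vD * Complex.exp (Complex.I * ω * T);
     (R : ℂ) * vD * Complex.exp (-(Complex.I * ω * T)), 0]

section ExpProduct

variable {𝕂 𝔸 : Type*} [RCLike 𝕂] [NormedRing 𝔸] [NormedAlgebra 𝕂 𝔸] [CompleteSpace 𝔸]

theorem hasDerivAt_exp_smul_mul_exp_smul (A B : 𝔸) (t : 𝕂) :
    HasDerivAt (fun s : 𝕂 => NormedSpace.exp (s • A) * NormedSpace.exp (s • B))
      ((A * NormedSpace.exp (t • A) + NormedSpace.exp (t • A) * B) * NormedSpace.exp (t • B)) t := by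
  rw [add_mul, mul_assoc _ B]
  exact (hasDerivAt_exp_smul_const' A t).mul (hasDerivAt_exp_smul_const' B t)

theorem Matrix.hasDerivAt_exp_smul_mul_exp_smul {n : Type*} [Fintype n] [DecidableEq n]
    (A B : Matrix n n 𝔸) (t : 𝕂) :
    HasDerivAt (fun s : 𝕂 => NormedSpace.exp (s • A) * NormedSpace.exp (s • B))
      ((A * NormedSpace.exp (t • A) + NormedSpace.exp (t • A) * B) * NormedSpace.exp (t • B)) t := by
  -- Instance search does not see through the `linftyOp` uniformity to the product one,
  -- so completeness is synthesized before the norm is installed and passed explicitly.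
  have hcomplete : CompleteSpace (Matrix n n 𝔸) := inferInstance
  let _ := Matrix.linftyOpNormedRing (n := n) (α := 𝔸)
  let _ := Matrix.linftyOpNormedAlgebra (n := n) (R := 𝕂) (α := 𝔸)
  exact @_root_.hasDerivAt_exp_smul_mul_exp_smul _ _ _ _ _ hcomplete A B t

end ExpProduct

def Kmat (ω : ℝ) : Matrix (Fin 2) (Fin 2) ℂ := diagonal ![(ω : ℂ) / 2, -((ω : ℂ) / 2)]

theorem Pmat_eq_exp (ω T : ℝ) : Pmat ω T = NormedSpace.exp (T • (I • Kmat ω)) := by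
  rw [Kmat, ← diagonal_smul, ← diagonal_smul, exp_diagonal, Pi.exp_def, ← Complex.exp_eq_exp_ℂ]
  ext i j
  fin_cases i <;> fin_cases j <;> simp [Pmat] <;> ring_nf

theorem Pmat_mul_Lmat_sub_Kmat_mul_Pmat (ω R vD T : ℝ) :
    Pmat ω T * Lmat ω R vD - Kmat ω * Pmat ω T = Dmat ω R vD T * Pmat ω T := by
  set θ : ℂ := I * ω * T / 2
  have hexp : cexp (I * ω * T) = cexp θ ^ 2 := by
    rw [← Complex.exp_nat_mul]; congr 1; ring
  have hexp_neg : cexp (-(I * ω * T)) = (cexp θ ^ 2)⁻¹ := by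
    rw [Complex.exp_neg, hexp]
  have hθ := Complex.exp_ne_zero θ
  ext i j
  fin_cases i <;> fin_cases j <;>
    simp [Pmat, Lmat, Kmat, Dmat, Matrix.mul_apply, Fin.sum_univ_two, hexp, hexp_neg,
      Complex.exp_neg] <;> field_simp <;> ring

theorem fundamental_solution_zero_momentum_general
    (ω R vD : ℝ)
    (U : ℝ → Matrix (Fin 2) (Fin 2) ℂ)
    (hU : ∀ T : ℝ, U T = Pmat ω T * NormedSpace.exp ((-(Complex.I * T)) • Lmat ω R vD)) :
    U 0 = 1 ∧
    ∀ T : ℝ, ∀ i j : Fin 2,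
      HasDerivAt (fun t : ℝ => U t i j) (((-Complex.I) • (Dmat ω R vD T * U T)) i j) T := by
  have hU' : ∀ t : ℝ, U t = Pmat ω t * NormedSpace.exp (t • (-I • Lmat ω R vD)) := by
    intro t
    rw [hU, ← Complex.coe_smul, smul_smul, mul_neg, mul_comm]
  refine ⟨by simp [hU', Pmat, one_fin_two], fun T i j => ?_⟩
  have hgenerator : I • Kmat ω * Pmat ω T + Pmat ω T * (-I • Lmat ω R vD)
      = -I • (Dmat ω R vD T * Pmat ω T) := by
    rw [← Pmat_mul_Lmat_sub_Kmat_mul_Pmat, smul_sub, smul_mul_assoc, mul_smul_comm, neg_smul,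
      neg_smul, neg_sub_neg, sub_eq_add_neg]
  have hderiv := Matrix.hasDerivAt_exp_smul_mul_exp_smul (I • Kmat ω) (-I • Lmat ω R vD) T
  simp only [← Pmat_eq_exp, ← hU'] at hderiv
  rw [hgenerator, smul_mul_assoc, mul_assoc, ← hU'] at hderiv
  exact hasDerivAt_pi.1 (hasDerivAt_pi.1 hderiv i) j

/-- **Explicit fundamental solution of the effective Dirac ODE at zero momentum**:
`U(T) = P(T) · exp(−iTL)` satisfies `U(0) = I` and `U′(T) = −i D(T) U(T)` for every `T`
(derivatives taken entrywise); i.e. `U` is a fundamental solution of `i U′ = D(T) U`. -/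
theorem fundamental_solution_zero_momentum
    (ω R vD : ℝ) (hω : 0 < ω)
    (U : ℝ → Matrix (Fin 2) (Fin 2) ℂ)
    (hU : ∀ T : ℝ, U T = Pmat ω T * NormedSpace.exp ((-(Complex.I * T)) • Lmat ω R vD)) :
    U 0 = 1 ∧
    ∀ T : ℝ, ∀ i j : Fin 2,
      HasDerivAt (fun t : ℝ => U t i j) (((-Complex.I) • (Dmat ω R vD T * U T)) i j) T :=
  fundamental_solution_zero_momentum_general ω R vD U hU
end
end

section
/- Floquet multipliers at zero momentum (from the proof of Proposition 3.4): Let ω > 0 and R, v_D ∈ ℝ, set T_per = 2π/ω, and let D(T) = [[0, R v_D e^{iωT}], [R v_D e^{−iωT}, 0]]. If U : ℝ → M₂(ℂ) is a fundamental solution of i U′(T) = D(T) U(T), then the spectrum of the monodromy matrix U(T_per) equals { e^{i μ T_per}, e^{−i μ T_per} }, where μ = ½ (√(ω² + 4 R² v_D²) − ω). -/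
/-!
In the frame rotating with the drive, `P(t) = diag(e^{iωt/2}, e^{-iωt/2})`, the equation becomes
autonomous: `V = P⁻¹ U` solves `i V' = H V` with `H = [[ω/2, g], [g, -ω/2]]`, `g = R v_D`, and
`H² = L²` for `L = √(ω² + 4g²)/2`. Hence `U(t) = P(t) exp(-iHt) = P(t) (cos(Lt) - i sin(Lt) H/L)`.
Uniqueness needs no Grönwall argument: `Y(t) = exp(iHt) P(t)⁻¹` solves the adjoint equation
`Y' = i Y D`, so `Y U` is constant, equal to `1`. At `T_per` we have `P = -1`, and `-exp(-iHT_per)`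
has trace `-2 cos(LT_per)` and determinant `1`; as `ωT_per/2 = π`, its eigenvalues are
`e^{±iμT_per}`.
-/

open Matrix Complex

noncomputable section

/-- `U : ℝ → M₂(ℂ)` is a fundamental solution of `i U′(T) = D(T) U(T)`:
`U(0) = I` and (entrywise) `U′(T) = −i D(T) U(T)` for every `T`. -/
def IsFundamentalSolution (D U : ℝ → Matrix (Fin 2) (Fin 2) ℂ) : Prop :=
  U 0 = 1 ∧
  ∀ T : ℝ, ∀ i j : Fin 2,
    HasDerivAt (fun t : ℝ => U t i j) (((-Complex.I) • (D T * U T)) i j) T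

namespace Matrix

section Calculus

variable {𝔸 : Type*} [NormedRing 𝔸] [NormedAlgebra ℝ 𝔸] {l m n : Type*}

theorem hasDerivAt_mul_apply [Fintype m] {A : ℝ → Matrix l m 𝔸} {B : ℝ → Matrix m n 𝔸}
    {A' : Matrix l m 𝔸} {B' : Matrix m n 𝔸} {t : ℝ}
    (hA : ∀ i j, HasDerivAt (fun s => A s i j) (A' i j) t)
    (hB : ∀ i j, HasDerivAt (fun s => B s i j) (B' i j) t) (i : l) (k : n) :
    HasDerivAt (fun s => (A s * B s) i k) ((A' * B t + A t * B') i k) t := by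
  simp only [mul_apply, add_apply, ← Finset.sum_add_distrib]
  exact HasDerivAt.fun_sum fun j _ => (hA i j).fun_mul (hB j k)

theorem hasDerivAt_diagonal_apply [DecidableEq n] {d : ℝ → n → 𝔸} {d' : n → 𝔸} {t : ℝ}
    (hd : ∀ k, HasDerivAt (fun s => d s k) (d' k) t) (i j : n) :
    HasDerivAt (fun s => diagonal (d s) i j) (diagonal d' i j) t := by
  by_cases hij : i = j
  · subst hij
    simpa using hd i
  · simpa [diagonal_apply_ne _ hij] using hasDerivAt_const t (0 : 𝔸)

theorem mul_eq_mul_zero_of_hasDerivAt [Fintype n] {Y U A : ℝ → Matrix n n 𝔸}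
    (hY : ∀ t i j, HasDerivAt (fun s => Y s i j) ((Y t * A t) i j) t)
    (hU : ∀ t i j, HasDerivAt (fun s => U s i j) ((-(A t * U t)) i j) t) (t : ℝ) :
    Y t * U t = Y 0 * U 0 := by
  ext i k
  have hderiv (s : ℝ) : HasDerivAt (fun s => (Y s * U s) i k) 0 s := by
    simpa [Matrix.mul_assoc] using hasDerivAt_mul_apply (hY s) (hU s) i k
  exact is_const_of_deriv_eq_zero (fun s => (hderiv s).differentiableAt)
    (fun s => (hderiv s).deriv) t 0

end Calculus

theorem spectrum_fin_two {K : Type*} [Field K] {A : Matrix (Fin 2) (Fin 2) K} {a b : K}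
    (htr : A.trace = a + b) (hdet : A.det = a * b) : spectrum K A = {a, b} := by
  ext z
  rw [mem_spectrum_iff_isRoot_charpoly, charpoly_fin_two, htr, hdet]
  have : z ^ 2 - (a + b) * z + a * b = (z - a) * (z - b) := by ring
  simp [this, sub_eq_zero]

section Cis

variable {n : Type*} [DecidableEq n] {K : Matrix n n ℂ}

/-- For an involution `K` this is `exp (i θ K)`. -/
def cis (K : Matrix n n ℂ) (θ : ℝ) : Matrix n n ℂ :=
  cos θ • 1 + (I * sin θ) • K

theorem cis_zero (K : Matrix n n ℂ) : cis K 0 = 1 := by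
  simp [cis]

theorem cis_add_pi (K : Matrix n n ℂ) (θ : ℝ) : cis K (θ + Real.pi) = -cis K θ := by
  rw [cis, cis]
  push_cast
  rw [Complex.cos_add_pi, Complex.sin_add_pi]
  module

theorem cis_neg_mul_cis [Fintype n] (hK : K * K = 1) (θ : ℝ) : cis K (-θ) * cis K θ = 1 := by
  have h := Complex.cos_sq_add_sin_sq (θ : ℂ)
  simp only [cis, Complex.ofReal_neg, Complex.cos_neg, Complex.sin_neg, add_mul, mul_add,
    smul_mul_smul, Matrix.one_mul, Matrix.mul_one, hK]
  linear_combination (norm := module) (h - sin θ ^ 2 * Complex.I_sq) • (1 : Matrix n n ℂ)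

theorem cis_mul_smul_self [Fintype n] (hK : K * K = 1) (θ : ℝ) (c : ℂ) :
    cis K θ * (c • K) = (c * I * sin θ) • 1 + (c * cos θ) • K := by
  simp only [cis, add_mul, smul_mul_smul, Matrix.one_mul, hK]
  module

theorem hasDerivAt_cis_apply [Fintype n] (hK : K * K = 1) (L t : ℝ) (i j : n) :
    HasDerivAt (fun s => cis K (L * s) i j) ((cis K (L * t) * ((I * L) • K)) i j) t := by
  have hlin : HasDerivAt (fun s : ℂ => (L : ℂ) * s) L t := by
    simpa using (hasDerivAt_id (t : ℂ)).const_mul (L : ℂ)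
  have hcos : HasDerivAt (fun s : ℝ => cos (L * s)) _ t := hlin.ccos.comp_ofReal
  have hsin : HasDerivAt (fun s : ℝ => sin (L * s)) _ t := hlin.csin.comp_ofReal
  have hentry : (fun s => cis K (L * s) i j) =
      fun s : ℝ => cos (L * s) * (1 : Matrix n n ℂ) i j + I * sin (L * s) * K i j := by
    ext s
    simp [cis]
  rw [hentry, cis_mul_smul_self hK]
  refine ((hcos.mul_const _).fun_add ((hsin.const_mul I).mul_const _)).congr_deriv ?_
  simp only [add_apply, smul_apply, smul_eq_mul, Complex.ofReal_mul]
  linear_combination (-(L * sin (L * t) * (1 : Matrix n n ℂ) i j)) * Complex.I_sq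

theorem spectrum_cis_fin_two {K : Matrix (Fin 2) (Fin 2) ℂ} (hK : K * K = 1) (htr : K.trace = 0)
    (θ : ℝ) : spectrum ℂ (cis K θ) = {Complex.exp (θ * I), Complex.exp (-θ * I)} := by
  have hK00 : K 0 0 * K 0 0 + K 0 1 * K 1 0 = 1 := by
    simpa [mul_apply, Fin.sum_univ_two] using congrFun (congrFun hK 0) 0
  have hK11 : K 1 1 = -K 0 0 := by
    rw [trace_fin_two] at htr
    linear_combination htr
  apply spectrum_fin_two
  · simp only [cis, trace_add, trace_smul, trace_one, Fintype.card_fin, Nat.cast_ofNat, smul_eq_mul,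
      htr, mul_zero, add_zero]
    rw [mul_comm, Complex.two_cos, neg_mul]
  · rw [← Complex.exp_add, neg_mul, add_neg_cancel, Complex.exp_zero, det_fin_two]
    simp only [cis, add_apply, smul_apply, smul_eq_mul, one_apply_eq, one_apply_ne zero_ne_one,
      one_apply_ne one_ne_zero, hK11]
    linear_combination Complex.cos_sq_add_sin_sq (θ : ℂ) -
      sin θ ^ 2 * (Complex.I_sq + I ^ 2 * hK00)

end Cis

end Matrix

namespace DrivenTwoLevel

def detuning (ω : ℝ) : Fin 2 → ℂ := ![ω / 2, -ω / 2]

/-- `P(t)⁻¹`, where `P(t) = diag(e^{iωt/2}, e^{-iωt/2})` is the frame rotating with the drive. -/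
def rotatingFrame (ω t : ℝ) : Matrix (Fin 2) (Fin 2) ℂ :=
  diagonal fun k => Complex.exp (-(I * t) * detuning ω k)

def rotatingHamiltonian (ω g : ℝ) : Matrix (Fin 2) (Fin 2) ℂ := !![ω / 2, g; g, -ω / 2]

def halfRabiFrequency (ω g : ℝ) : ℝ := √(ω ^ 2 + 4 * g ^ 2) / 2

theorem halfRabiFrequency_pos {ω : ℝ} (hω : ω ≠ 0) (g : ℝ) : 0 < halfRabiFrequency ω g := by
  unfold halfRabiFrequency
  positivity

theorem rotatingHamiltonian_mul_self (ω g : ℝ) :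
    rotatingHamiltonian ω g * rotatingHamiltonian ω g =
      ((halfRabiFrequency ω g : ℂ) ^ 2) • 1 := by
  have hL : (halfRabiFrequency ω g : ℂ) ^ 2 = ω ^ 2 / 4 + g ^ 2 := by
    rw [halfRabiFrequency, ← Complex.ofReal_pow, div_pow, Real.sq_sqrt (by positivity)]
    push_cast
    ring
  rw [hL]
  ext i j
  fin_cases i <;> fin_cases j <;> simp [rotatingHamiltonian] <;> ring

theorem trace_rotatingHamiltonian (ω g : ℝ) : (rotatingHamiltonian ω g).trace = 0 := by
  simp only [rotatingHamiltonian, trace_fin_two, of_apply, cons_val', cons_val_zero,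
    cons_val_fin_one, cons_val_one]
  ring

theorem hasDerivAt_rotatingFrame_apply (ω t : ℝ) (i j : Fin 2) :
    HasDerivAt (fun s => rotatingFrame ω s i j)
      ((rotatingFrame ω t * diagonal fun k => -I * detuning ω k) i j) t := by
  rw [rotatingFrame, diagonal_mul_diagonal]
  refine hasDerivAt_diagonal_apply (fun k => ?_) i j
  have hlin : HasDerivAt (fun s : ℂ => -(I * s) * detuning ω k) (-(I * 1) * detuning ω k) t :=
    ((hasDerivAt_id (t : ℂ)).const_mul I).neg.mul_const (detuning ω k)
  exact hlin.cexp.comp_ofReal.congr_deriv (by rw [mul_one])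

theorem rotatingFrame_neg_mul_self (ω t : ℝ) : rotatingFrame ω (-t) * rotatingFrame ω t = 1 := by
  rw [rotatingFrame, rotatingFrame, diagonal_mul_diagonal, ← diagonal_one]
  congr 1
  ext k
  rw [← Complex.exp_add]
  push_cast
  ring_nf
  exact Complex.exp_zero

theorem rotatingFrame_neg_period {ω : ℝ} (hω : ω ≠ 0) :
    rotatingFrame ω (-(2 * Real.pi / ω)) = -1 := by
  ext i j
  have hω' : (ω : ℂ) ≠ 0 := Complex.ofReal_ne_zero.mpr hω
  fin_cases i <;> fin_cases j <;> simp [rotatingFrame, detuning]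
  · rw [show I * (2 * Real.pi / ω) * (ω / 2) = Real.pi * I by field_simp, Complex.exp_pi_mul_I]
  · rw [show I * (2 * Real.pi / ω) * (-ω / 2) = -(Real.pi * I) by field_simp,
      Complex.exp_neg_pi_mul_I]

theorem rotatingHamiltonian_mul_rotatingFrame_sub (ω R vD t : ℝ) :
    rotatingHamiltonian ω (R * vD) * rotatingFrame ω t - rotatingFrame ω t * diagonal (detuning ω) =
      rotatingFrame ω t * Dmat ω R vD t := by
  ext i j
  fin_cases i <;> fin_cases j <;>
    simp [rotatingFrame, detuning, rotatingHamiltonian, Dmat, mul_apply, Fin.sum_univ_two,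
      vecMul, dotProduct]
  · ring
  · rw [show -(I * t * (-ω / 2)) = -(I * t * (ω / 2)) + I * ω * t by ring, Complex.exp_add]
    ring
  · rw [show -(I * t * (ω / 2)) = -(I * t * (-ω / 2)) + -(I * ω * t) by ring, Complex.exp_add]
    ring
  · ring

def rabiAxis (ω g : ℝ) : Matrix (Fin 2) (Fin 2) ℂ :=
  (halfRabiFrequency ω g : ℂ)⁻¹ • rotatingHamiltonian ω g

theorem rabiAxis_mul_self {ω : ℝ} (hω : ω ≠ 0) (g : ℝ) : rabiAxis ω g * rabiAxis ω g = 1 := by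
  have hL : (halfRabiFrequency ω g : ℂ) ≠ 0 :=
    Complex.ofReal_ne_zero.mpr (halfRabiFrequency_pos hω g).ne'
  rw [rabiAxis, smul_mul_smul, rotatingHamiltonian_mul_self, smul_smul]
  field_simp
  simp

theorem trace_rabiAxis (ω g : ℝ) : (rabiAxis ω g).trace = 0 := by
  simp [rabiAxis, trace_rotatingHamiltonian]

theorem halfRabiFrequency_smul_rabiAxis {ω : ℝ} (hω : ω ≠ 0) (g : ℝ) :
    (halfRabiFrequency ω g : ℂ) • rabiAxis ω g = rotatingHamiltonian ω g := by
  have hL : (halfRabiFrequency ω g : ℂ) ≠ 0 :=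
    Complex.ofReal_ne_zero.mpr (halfRabiFrequency_pos hω g).ne'
  rw [rabiAxis, smul_smul, mul_inv_cancel₀ hL, one_smul]

def adjointSolution (ω g t : ℝ) : Matrix (Fin 2) (Fin 2) ℂ :=
  cis (rabiAxis ω g) (halfRabiFrequency ω g * t) * rotatingFrame ω t

theorem hasDerivAt_adjointSolution_apply {ω : ℝ} (hω : ω ≠ 0) (R vD t : ℝ) (i j : Fin 2) :
    HasDerivAt (fun s => adjointSolution ω (R * vD) s i j)
      ((adjointSolution ω (R * vD) t * (I • Dmat ω R vD t)) i j) t := by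
  set C := cis (rabiAxis ω (R * vD)) (halfRabiFrequency ω (R * vD) * t)
  have hdiag : (diagonal fun k => -I * detuning ω k) = (-I) • diagonal (detuning ω) := by
    rw [← diagonal_smul]
    rfl
  have hderiv :
      C * ((I * halfRabiFrequency ω (R * vD)) • rabiAxis ω (R * vD)) * rotatingFrame ω t +
        C * (rotatingFrame ω t * diagonal fun k => -I * detuning ω k) =
        adjointSolution ω (R * vD) t * (I • Dmat ω R vD t) := calc
    _ = C * (I • (rotatingHamiltonian ω (R * vD) * rotatingFrame ω t -
          rotatingFrame ω t * diagonal (detuning ω))) := by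
      rw [mul_smul, halfRabiFrequency_smul_rabiAxis hω, hdiag, Matrix.mul_assoc, ← mul_add,
        smul_mul_assoc, mul_smul_comm, smul_sub, neg_smul, sub_eq_add_neg]
    _ = C * (I • (rotatingFrame ω t * Dmat ω R vD t)) := by
      rw [rotatingHamiltonian_mul_rotatingFrame_sub]
    _ = adjointSolution ω (R * vD) t * (I • Dmat ω R vD t) := by
      simp only [adjointSolution, Matrix.mul_assoc, mul_smul_comm]
      rfl
  exact (hasDerivAt_mul_apply (hasDerivAt_cis_apply (rabiAxis_mul_self hω _) _ t)
    (hasDerivAt_rotatingFrame_apply ω t) i j).congr_deriv (by rw [hderiv])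

theorem adjointSolution_zero (ω g : ℝ) : adjointSolution ω g 0 = 1 := by
  simp [adjointSolution, rotatingFrame, cis_zero]

theorem eq_rotatingFrame_mul_cis {ω : ℝ} (hω : ω ≠ 0) {R vD : ℝ}
    {U : ℝ → Matrix (Fin 2) (Fin 2) ℂ} (hU : IsFundamentalSolution (Dmat ω R vD) U) (t : ℝ) :
    U t = rotatingFrame ω (-t) *
      cis (rabiAxis ω (R * vD)) (-(halfRabiFrequency ω (R * vD) * t)) := by
  obtain ⟨hU0, hU'⟩ := hU
  have hYU : adjointSolution ω (R * vD) t * U t = 1 := by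
    rw [mul_eq_mul_zero_of_hasDerivAt (hasDerivAt_adjointSolution_apply hω R vD) ?_ t,
      adjointSolution_zero, hU0, Matrix.one_mul]
    intro s i j
    simpa only [smul_mul_assoc, neg_smul] using hU' s i j
  set X := rotatingFrame ω (-t) *
    cis (rabiAxis ω (R * vD)) (-(halfRabiFrequency ω (R * vD) * t))
  have hXY : X * adjointSolution ω (R * vD) t = 1 := by
    rw [adjointSolution, Matrix.mul_assoc, ← Matrix.mul_assoc (cis _ _),
      cis_neg_mul_cis (rabiAxis_mul_self hω _), Matrix.one_mul, rotatingFrame_neg_mul_self]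
  calc U t = X * adjointSolution ω (R * vD) t * U t := by rw [hXY, Matrix.one_mul]
    _ = X := by rw [Matrix.mul_assoc, hYU, Matrix.mul_one]

end DrivenTwoLevel

open DrivenTwoLevel

/-- **Floquet multipliers at zero momentum** (from the proof of Proposition 3.4):
for `T_per = 2π/ω`, the spectrum of the monodromy matrix `U(T_per)` of
`i U′ = D(T) U` equals `{e^{iμT_per}, e^{−iμT_per}}` with
`μ = ½(√(ω² + 4R²v_D²) − ω)`. -/
theorem floquet_multipliers_zero_momentum
    (ω R vD : ℝ) (hω : 0 < ω)
    (Tper : ℝ) (hTper : Tper = 2 * Real.pi / ω)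
    (U : ℝ → Matrix (Fin 2) (Fin 2) ℂ)
    (hU : IsFundamentalSolution (Dmat ω R vD) U) :
    spectrum ℂ (U Tper) =
      {Complex.exp (Complex.I * ((Real.sqrt (ω ^ 2 + 4 * R ^ 2 * vD ^ 2) - ω) / 2 : ℝ) * Tper),
       Complex.exp (-(Complex.I * ((Real.sqrt (ω ^ 2 + 4 * R ^ 2 * vD ^ 2) - ω) / 2 : ℝ) * Tper))} := by
  set μ := (Real.sqrt (ω ^ 2 + 4 * R ^ 2 * vD ^ 2) - ω) / 2
  have hphase : -(halfRabiFrequency ω (R * vD) * Tper) + Real.pi = -(μ * Tper) := by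
    rw [halfRabiFrequency, hTper, mul_pow]
    field_simp
    ring
  have hmonodromy : U Tper = cis (rabiAxis ω (R * vD)) (-(μ * Tper)) := by
    rw [eq_rotatingFrame_mul_cis hω.ne' hU, ← hphase, cis_add_pi, hTper,
      rotatingFrame_neg_period hω.ne', neg_one_mul]
  rw [hmonodromy, spectrum_cis_fin_two (rabiAxis_mul_self hω.ne' _) (trace_rabiAxis _ _),
    Set.pair_comm]
  push_cast
  ring_nf
end
end

section
/- Floquet-multiplier gap for the forced Dirac system at small momenta (Proposition 3.4, Fourier-side form): Let ω > 0 and R, v_D ∈ ℝ with R v_D ≠ 0 and R² v_D² < 2ω², and set T_per = 2π/ω. Then there exist d₀ > 0 and g > 0 such that for every ξ = (ξ₁, ξ₂) ∈ ℝ² with ‖ξ‖ ≤ d₀ and every fundamental solution U of i U′(T) = D̂(T; ξ) U(T), the spectrum of the monodromy matrix U(T_per) contains no point of the arc { e^{iy} : y ∈ ℝ, |y| ≤ g }. -/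
/-!
At `ξ = 0` the system is the Rabi problem. In the frame rotating with the drive,
`E(T) = diag(e^{iωT/2}, e^{-iωT/2})`, it becomes autonomous with Hamiltonian
`H = [[ω/2, b], [b, -ω/2]]`, `b = v_D R`, so `U₀(T) = E(T) exp(-iTH)` is explicit.
As `E(T_per) = -1` and `H² = Ω²` with `Ω = √(ω²/4 + b²)`, the unperturbed monodromy has trace
`-2 cos(Ω T_per)`, and the hypotheses `b ≠ 0`, `b² < 2ω²` place `Ω T_per` in `(π, 3π)`,
so this trace is not `2`.

Every monodromy matrix has determinant `1` because `D̂` is traceless, so a multiplier `e^{iy}`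
forces the trace to be `2 cos y`, which lies within `y²` of `2`. By Grönwall's inequality the
trace of `U(T_per)` differs from the unperturbed one by `O(‖ξ‖)`, uniformly in the solution, so
for small `ξ` and `y` the two are incompatible.
-/

open Matrix Complex

noncomputable section

/-- The Fourier-side effective Dirac Hamiltonian with circularly polarized forcing:
`D̂(T; ξ) = v_D · [[0, ξ₁ + iξ₂ + R e^{iωT}], [ξ₁ − iξ₂ + R e^{−iωT}, 0]]`. -/
def Dhat (ω R vD : ℝ) (ξ₁ ξ₂ : ℝ) (T : ℝ) : Matrix (Fin 2) (Fin 2) ℂ :=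
  (vD : ℂ) •
    !![0, (ξ₁ : ℂ) + Complex.I * ξ₂ + (R : ℂ) * Complex.exp (Complex.I * ω * T);
       (ξ₁ : ℂ) - Complex.I * ξ₂ + (R : ℂ) * Complex.exp (-(Complex.I * ω * T)), 0]

open scoped NNReal Real

-- Matrices carry the `ℓ∞` operator norm (maximal row sum), which is submultiplicative and
-- induces the entrywise topology.
attribute [local instance] Matrix.linftyOpSeminormedAddCommGroup
  Matrix.linftyOpNormedAddCommGroup Matrix.linftyOpNormedSpace Matrix.linftyOpNormedRing
  Matrix.linftyOpNormedAlgebra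

theorem Matrix.trace_eq_add_inv_of_mem_spectrum {K : Type*} [Field K]
    {M : Matrix (Fin 2) (Fin 2) K} (hM : M.det = 1) {μ : K} (hμ : μ ∈ spectrum K M) :
    M.trace = μ + μ⁻¹ := by
  rw [spectrum.mem_iff, Matrix.isUnit_iff_isUnit_det, isUnit_iff_ne_zero, not_not] at hμ
  have hchar : μ ^ 2 - M.trace * μ + 1 = 0 := by
    rw [← hμ, ← hM, Matrix.det_fin_two, Matrix.det_fin_two, Matrix.trace_fin_two]
    simp only [Matrix.sub_apply, Matrix.algebraMap_matrix_apply, Algebra.algebraMap_self,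
      RingHom.id_apply, Fin.isValue, ↓reduceIte, zero_ne_one, one_ne_zero]
    ring
  have hμ0 : μ ≠ 0 := by
    rintro rfl
    simp at hchar
  field_simp
  linear_combination -hchar

theorem IsFundamentalSolution.det_eq_one {D U : ℝ → Matrix (Fin 2) (Fin 2) ℂ}
    (hU : IsFundamentalSolution D U) (hD : ∀ T, (D T).trace = 0) (T : ℝ) : (U T).det = 1 := by
  have hderiv : ∀ t, HasDerivAt (fun t => (U t).det) 0 t := by
    intro t
    have h := ((hU.2 t 0 0).fun_mul (hU.2 t 1 1)).fun_sub ((hU.2 t 0 1).fun_mul (hU.2 t 1 0))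
    simp only [← Matrix.det_fin_two] at h
    refine h.congr_deriv ?_
    have htr := hD t
    rw [Matrix.trace_fin_two] at htr
    simp only [Matrix.smul_apply, Matrix.mul_apply, Fin.sum_univ_two, smul_eq_mul]
    linear_combination (-I) * (U t 0 0 * U t 1 1 - U t 0 1 * U t 1 0) * htr
  rw [is_const_of_deriv_eq_zero (fun t => (hderiv t).differentiableAt)
    (fun t => (hderiv t).deriv) T 0, hU.1, Matrix.det_one]

theorem Matrix.hasDerivAt_iff {m n : Type*} [Fintype m] [Fintype n]
    {U : ℝ → Matrix m n ℂ} {U' : Matrix m n ℂ} {T : ℝ} :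
    HasDerivAt U U' T ↔ ∀ i j, HasDerivAt (fun t => U t i j) (U' i j) T := by
  let e : Matrix m n ℂ ≃L[ℝ] (m → n → ℂ) :=
    (Matrix.ofLinearEquiv ℝ).symm.toContinuousLinearEquiv
  have he : HasDerivAt U U' T ↔ HasDerivAt (fun t => e (U t)) (e U') T :=
    ⟨fun h => e.hasFDerivAt.comp_hasDerivAt T h, fun h => e.symm.hasFDerivAt.comp_hasDerivAt T h⟩
  rw [he, hasDerivAt_pi]
  exact forall_congr' fun i => hasDerivAt_pi

theorem isFundamentalSolution_iff {D U : ℝ → Matrix (Fin 2) (Fin 2) ℂ} :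
    IsFundamentalSolution D U ↔ U 0 = 1 ∧ ∀ T, HasDerivAt U (-I • (D T * U T)) T := by
  simp only [IsFundamentalSolution, Matrix.hasDerivAt_iff (U := U)]

theorem Matrix.norm_entry_le_linfty_opNorm {m n α : Type*} [Fintype m] [Fintype n]
    [SeminormedAddCommGroup α] (A : Matrix m n α) (i : m) (j : n) : ‖A i j‖ ≤ ‖A‖ := by
  rw [Matrix.linfty_opNorm_def, ← coe_nnnorm, NNReal.coe_le_coe]
  exact (Finset.single_le_sum (fun _ _ => zero_le) (Finset.mem_univ j)).trans
    (Finset.le_sup (f := fun i => ∑ j, ‖A i j‖₊) (Finset.mem_univ i))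

theorem Matrix.norm_trace_le_linfty_opNorm {n α : Type*} [Fintype n]
    [SeminormedAddCommGroup α] (A : Matrix n n α) : ‖A.trace‖ ≤ Fintype.card n * ‖A‖ := by
  calc ‖A.trace‖ ≤ ∑ i, ‖A i i‖ := norm_sum_le _ _
    _ ≤ ∑ _i : n, ‖A‖ := Finset.sum_le_sum fun i _ => A.norm_entry_le_linfty_opNorm i i
    _ = Fintype.card n * ‖A‖ := by simp

theorem Matrix.linfty_opNorm_offDiag {α : Type*} [SeminormedAddCommGroup α] (a b : α) :
    ‖!![0, a; b, 0]‖ = max ‖a‖ ‖b‖ := by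
  simp [Matrix.linfty_opNorm_def, Fin.univ_succ]

theorem IsFundamentalSolution.hasDerivAt {D U : ℝ → Matrix (Fin 2) (Fin 2) ℂ}
    (hU : IsFundamentalSolution D U) (T : ℝ) : HasDerivAt U (-I • (D T * U T)) T :=
  Matrix.hasDerivAt_iff.mpr (hU.2 T)

theorem IsFundamentalSolution.continuous {D U : ℝ → Matrix (Fin 2) (Fin 2) ℂ}
    (hU : IsFundamentalSolution D U) : Continuous U :=
  continuous_iff_continuousAt.mpr fun T => (hU.hasDerivAt T).continuousAt

theorem IsFundamentalSolution.norm_sub_le_gronwallBound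
    {A B U W : ℝ → Matrix (Fin 2) (Fin 2) ℂ} (hU : IsFundamentalSolution A U)
    (hW : IsFundamentalSolution B W) {K : ℝ≥0} {δ C T : ℝ} (hT : 0 ≤ T)
    (hA : ∀ t, ‖A t‖ ≤ K) (hAB : ∀ t, ‖A t - B t‖ ≤ δ) (hWC : ∀ t ∈ Set.Icc 0 T, ‖W t‖ ≤ C) :
    ‖U T - W T‖ ≤ gronwallBound 0 K (δ * C) T := by
  have norm_smul_mul (M X : Matrix (Fin 2) (Fin 2) ℂ) : ‖-I • (M * X)‖ ≤ ‖M‖ * ‖X‖ := by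
    rw [norm_smul, norm_neg, norm_I, one_mul]
    exact norm_mul_le _ _
  have hv : ∀ t, LipschitzWith K (fun X => -I • (A t * X)) := fun t =>
    LipschitzWith.of_dist_le_mul fun X Y => by
      rw [dist_eq_norm, dist_eq_norm, ← smul_sub, ← mul_sub]
      exact (norm_smul_mul _ _).trans (mul_le_mul_of_nonneg_right (hA t) (norm_nonneg _))
  have hW_approx : ∀ t ∈ Set.Ico 0 T, dist (-I • (B t * W t)) (-I • (A t * W t)) ≤ δ * C := by
    intro t ht
    rw [dist_eq_norm, ← smul_sub, ← sub_mul]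
    refine (norm_smul_mul _ _).trans ?_
    rw [norm_sub_rev]
    exact mul_le_mul (hAB t) (hWC t (Set.Ico_subset_Icc_self ht)) (norm_nonneg _)
      ((norm_nonneg _).trans (hAB t))
  simpa [dist_eq_norm, hU.1, hW.1] using dist_le_of_approx_trajectories_ODE hv
    hU.continuous.continuousOn (fun t _ => (hU.hasDerivAt t).hasDerivWithinAt)
    (εf := 0) (fun t _ => by simp) hW.continuous.continuousOn
    (fun t _ => (hW.hasDerivAt t).hasDerivWithinAt) hW_approx (δ := 0) (by simp [hU.1, hW.1])
    T ⟨hT, le_rfl⟩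

section Rabi

variable (ω b : ℝ)

def rabiHamiltonian : Matrix (Fin 2) (Fin 2) ℂ :=
  !![(ω / 2 : ℝ), b; b, (-(ω / 2) : ℝ)]

def rabiFrequency : ℝ :=
  √((ω / 2) ^ 2 + b ^ 2)

-- `exp (-i T H)`, since `H² = Ω² • 1`
def rabiPropagator (T : ℝ) : Matrix (Fin 2) (Fin 2) ℂ :=
  Real.cos (rabiFrequency ω b * T) • 1 -
    (Real.sin (rabiFrequency ω b * T) / rabiFrequency ω b) • (I • rabiHamiltonian ω b)

def rotatingFrame (T : ℝ) : Matrix (Fin 2) (Fin 2) ℂ :=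
  !![cexp (I * ω * T / 2), 0; 0, cexp (-(I * ω * T / 2))]

theorem rabiHamiltonian_mul_self :
    rabiHamiltonian ω b * rabiHamiltonian ω b = rabiFrequency ω b ^ 2 • 1 := by
  rw [rabiFrequency, Real.sq_sqrt (by positivity), rabiHamiltonian, Matrix.mul_fin_two,
    Matrix.one_fin_two]
  ext i j
  fin_cases i <;> fin_cases j <;>
    simp only [Matrix.smul_apply, Complex.real_smul, smul_zero, mul_one, Matrix.of_apply,
      Matrix.cons_val', Matrix.cons_val_zero, Matrix.cons_val_one, Matrix.cons_val_fin_one,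
      Fin.isValue, Fin.zero_eta, Fin.mk_one] <;>
    push_cast <;> ring

theorem trace_rabiHamiltonian : (rabiHamiltonian ω b).trace = 0 := by
  simp [rabiHamiltonian, Matrix.trace_fin_two]

theorem hasDerivAt_rabiPropagator (hω : ω ≠ 0) (T : ℝ) :
    HasDerivAt (rabiPropagator ω b)
      (-I • (rabiHamiltonian ω b * rabiPropagator ω b T)) T := by
  unfold rabiPropagator
  set Ω := rabiFrequency ω b with hΩdef
  have hΩ : Ω ≠ 0 := (Real.sqrt_pos.mpr (by positivity)).ne'
  have hlin : HasDerivAt (fun t => Ω * t) Ω T := by simpa using (hasDerivAt_id T).const_mul Ω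
  have h := ((hlin.cos).smul_const (1 : Matrix (Fin 2) (Fin 2) ℂ)).sub
    (((hlin.sin).div_const Ω).smul_const (I • rabiHamiltonian ω b))
  refine h.congr_deriv ?_
  rw [mul_sub, Matrix.mul_smul, Matrix.mul_smul, Matrix.mul_smul, rabiHamiltonian_mul_self,
    ← hΩdef, mul_one, mul_div_cancel_right₀ _ hΩ]
  match_scalars
  · field_simp
    rw [I_sq]
    ring
  · simp only [Complex.coe_algebraMap]
    ring

theorem hasDerivAt_rotatingFrame (T : ℝ) :
    HasDerivAt (rotatingFrame ω) (I • (rotatingFrame ω T * rabiHamiltonian ω 0)) T := by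
  have hlin : HasDerivAt (fun t : ℝ => I * ω * t / 2) (I * ω / 2) T := by
    simpa using ((hasDerivAt_id T).ofReal_comp.const_mul (I * ω)).div_const 2
  refine Matrix.hasDerivAt_iff.mpr fun i j => ?_
  fin_cases i <;> fin_cases j <;>
    simp only [rotatingFrame, rabiHamiltonian, Matrix.mul_fin_two, Matrix.smul_apply, ofReal_zero,
      mul_zero, zero_mul, add_zero, smul_zero, Matrix.of_apply, Matrix.cons_val',
      Matrix.cons_val_zero, Matrix.cons_val_one, Matrix.cons_val_fin_one, Fin.isValue,
      Fin.zero_eta, Fin.mk_one]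
  · exact hlin.cexp.congr_deriv (by push_cast; ring)
  · exact hasDerivAt_const T 0
  · exact hasDerivAt_const T 0
  · exact hlin.fun_neg.cexp.congr_deriv (by push_cast; ring)

def rabiSolution (T : ℝ) : Matrix (Fin 2) (Fin 2) ℂ :=
  rotatingFrame ω T * rabiPropagator ω b T

theorem trace_rabiSolution_period (hω : ω ≠ 0) :
    (rabiSolution ω b (2 * π / ω)).trace = -(2 * Real.cos (rabiFrequency ω b * (2 * π / ω))) := by
  have hhalf : I * ω * ((2 * π / ω : ℝ) : ℂ) / 2 = π * I := by
    have : (ω : ℂ) ≠ 0 := by exact_mod_cast hω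
    push_cast
    field_simp
  have hframe : rotatingFrame ω (2 * π / ω) = -1 := by
    rw [rotatingFrame, hhalf, Complex.exp_neg, Complex.exp_pi_mul_I]
    simp [Matrix.one_fin_two]
  rw [rabiSolution, hframe, neg_one_mul, Matrix.trace_neg, rabiPropagator, Matrix.trace_sub,
    Matrix.trace_smul, Matrix.trace_smul, Matrix.trace_smul, trace_rabiHamiltonian,
    Matrix.trace_one, Fintype.card_fin]
  simp [mul_comm]

end Rabi

theorem Dhat_zero_mul_rotatingFrame (ω R vD T : ℝ) :
    Dhat ω R vD 0 0 T * rotatingFrame ω T =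
      rotatingFrame ω T * (rabiHamiltonian ω (vD * R) - rabiHamiltonian ω 0) := by
  have hsplit : cexp (I * ω * T) = cexp (I * ω * T / 2) * cexp (I * ω * T / 2) := by
    rw [← Complex.exp_add, add_halves]
  have hsplit' : cexp (-(I * ω * T)) = cexp (-(I * ω * T / 2)) * cexp (-(I * ω * T / 2)) := by
    rw [← Complex.exp_add, ← neg_add, add_halves]
  have hinv : cexp (I * ω * T / 2) * cexp (-(I * ω * T / 2)) = 1 := by
    rw [← Complex.exp_add, add_neg_cancel, Complex.exp_zero]
  ext i j
  fin_cases i <;> fin_cases j <;>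
    simp only [Dhat, rotatingFrame, rabiHamiltonian, Matrix.mul_apply, Fin.sum_univ_two,
      Matrix.smul_apply, Matrix.sub_apply, Matrix.of_apply, Matrix.cons_val', Matrix.cons_val_zero,
      Matrix.cons_val_one, Matrix.cons_val_fin_one, Fin.isValue, Fin.zero_eta, Fin.mk_one,
      smul_eq_mul]
  · push_cast
    ring
  · rw [hsplit]
    push_cast
    linear_combination (vD : ℂ) * R * cexp (I * ω * T / 2) * hinv
  · rw [hsplit']
    push_cast
    linear_combination (vD : ℂ) * R * cexp (-(I * ω * T / 2)) * hinv
  · push_cast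
    ring

theorem isFundamentalSolution_rabiSolution (ω R vD : ℝ) (hω : ω ≠ 0) :
    IsFundamentalSolution (Dhat ω R vD 0 0) (rabiSolution ω (vD * R)) := by
  rw [isFundamentalSolution_iff]
  refine ⟨?_, fun T => ?_⟩
  · simp [rabiSolution, rotatingFrame, rabiPropagator, Matrix.one_fin_two]
  · refine ((hasDerivAt_rotatingFrame ω T).mul
      (hasDerivAt_rabiPropagator ω (vD * R) hω T)).congr_deriv ?_
    rw [rabiSolution, ← mul_assoc, Dhat_zero_mul_rotatingFrame]
    simp only [Matrix.smul_mul, Matrix.mul_smul, mul_sub, sub_mul, mul_assoc]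
    module

theorem trace_Dhat (ω R vD ξ₁ ξ₂ T : ℝ) : (Dhat ω R vD ξ₁ ξ₂ T).trace = 0 := by
  simp [Dhat, Matrix.trace_fin_two]

theorem Dhat_sub_Dhat_zero (ω R vD ξ₁ ξ₂ T : ℝ) :
    Dhat ω R vD ξ₁ ξ₂ T - Dhat ω R vD 0 0 T =
      (vD : ℂ) • !![0, ξ₁ + ξ₂ * I; ξ₁ + (-ξ₂ : ℝ) * I, 0] := by
  ext i j
  fin_cases i <;> fin_cases j <;>
    simp only [Dhat, Matrix.smul_apply, Matrix.sub_apply, Matrix.of_apply, Matrix.cons_val',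
      Matrix.cons_val_zero, Matrix.cons_val_one, Matrix.cons_val_fin_one, Fin.isValue,
      Fin.zero_eta, Fin.mk_one] <;>
    push_cast <;> ring

theorem norm_Dhat_sub_Dhat_zero (ω R vD ξ₁ ξ₂ T : ℝ) :
    ‖Dhat ω R vD ξ₁ ξ₂ T - Dhat ω R vD 0 0 T‖ = |vD| * √(ξ₁ ^ 2 + ξ₂ ^ 2) := by
  rw [Dhat_sub_Dhat_zero, norm_smul, Matrix.linfty_opNorm_offDiag, norm_add_mul_I,
    norm_add_mul_I, neg_sq, max_self, Complex.norm_real, Real.norm_eq_abs]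

theorem norm_Dhat_zero (ω R vD T : ℝ) : ‖Dhat ω R vD 0 0 T‖ = |vD| * |R| := by
  simp [Dhat, Matrix.linfty_opNorm_offDiag, Complex.norm_exp]

theorem norm_Dhat_le (ω R vD ξ₁ ξ₂ T : ℝ) :
    ‖Dhat ω R vD ξ₁ ξ₂ T‖ ≤ |vD| * (|R| + √(ξ₁ ^ 2 + ξ₂ ^ 2)) := by
  calc ‖Dhat ω R vD ξ₁ ξ₂ T‖
      = ‖Dhat ω R vD 0 0 T + (Dhat ω R vD ξ₁ ξ₂ T - Dhat ω R vD 0 0 T)‖ := by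
        rw [add_sub_cancel]
    _ ≤ |vD| * |R| + |vD| * √(ξ₁ ^ 2 + ξ₂ ^ 2) := by
        rw [← norm_Dhat_zero ω R vD T, ← norm_Dhat_sub_Dhat_zero]
        exact norm_add_le _ _
    _ = |vD| * (|R| + √(ξ₁ ^ 2 + ξ₂ ^ 2)) := by ring

theorem gronwallBound_zero_mul (K a ε x : ℝ) :
    gronwallBound 0 K (a * ε) x = a * gronwallBound 0 K ε x := by
  unfold gronwallBound
  split_ifs <;> ring

theorem gronwallBound_zero_nonneg {K ε x : ℝ} (hK : 0 ≤ K) (hε : 0 ≤ ε) (hx : 0 ≤ x) :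
    0 ≤ gronwallBound 0 K ε x := by
  simpa [gronwallBound_x0] using gronwallBound_mono le_rfl hε hK hx

theorem exists_forall_norm_trace_sub_lt (ω R vD T : ℝ) (hT : 0 ≤ T)
    {W : ℝ → Matrix (Fin 2) (Fin 2) ℂ} (hW : IsFundamentalSolution (Dhat ω R vD 0 0) W)
    {ε : ℝ} (hε : 0 < ε) :
    ∃ d₀ > 0, ∀ ξ₁ ξ₂ : ℝ, √(ξ₁ ^ 2 + ξ₂ ^ 2) ≤ d₀ →
      ∀ U, IsFundamentalSolution (Dhat ω R vD ξ₁ ξ₂) U → ‖(U T).trace - (W T).trace‖ < ε := by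
  obtain ⟨C, hC⟩ := isCompact_Icc.exists_bound_of_continuousOn (hW.continuous.continuousOn)
  have hC0 : 0 ≤ C := (norm_nonneg _).trans (hC 0 ⟨le_rfl, hT⟩)
  let K : ℝ≥0 := ⟨|vD| * (|R| + 1), by positivity⟩
  set M := gronwallBound 0 K (|vD| * C) T
  have hM : 0 ≤ M := gronwallBound_zero_nonneg K.2 (by positivity) hT
  refine ⟨min 1 (ε / (2 * (M + 1))), by positivity, fun ξ₁ ξ₂ hξ U hU => ?_⟩
  set ρ := √(ξ₁ ^ 2 + ξ₂ ^ 2)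
  have hclose : ‖U T - W T‖ ≤ ρ * M := by
    have := hU.norm_sub_le_gronwallBound hW hT (K := K) (δ := |vD| * ρ)
      (fun t => (norm_Dhat_le ω R vD ξ₁ ξ₂ t).trans (mul_le_mul_of_nonneg_left
        (by linarith [min_le_left 1 (ε / (2 * (M + 1)))]) (abs_nonneg vD)))
      (fun t => (norm_Dhat_sub_Dhat_zero ω R vD ξ₁ ξ₂ t).le) hC
    rwa [mul_comm |vD| ρ, mul_assoc, gronwallBound_zero_mul] at this
  have hρ : ρ * M ≤ ε / (2 * (M + 1)) * M :=
    mul_le_mul_of_nonneg_right (hξ.trans (min_le_right _ _)) hM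
  calc ‖(U T).trace - (W T).trace‖ = ‖(U T - W T).trace‖ := by rw [Matrix.trace_sub]
    _ ≤ 2 * ‖U T - W T‖ := by simpa using (U T - W T).norm_trace_le_linfty_opNorm
    _ ≤ 2 * (ε / (2 * (M + 1)) * M) := by linarith
    _ = ε * (M / (M + 1)) := by field_simp
    _ < ε := mul_lt_of_lt_one_right hε ((div_lt_one (by positivity)).mpr (lt_add_one M))

theorem Real.neg_one_lt_cos_of_mem_Ioo {x : ℝ} (hx : x ∈ Set.Ioo π (3 * π)) : -1 < Real.cos x := by
  rw [← Real.cos_sub_two_pi, ← Real.cos_abs, ← Real.cos_pi]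
  exact Real.cos_lt_cos_of_nonneg_of_le_pi (abs_nonneg _) le_rfl
    (abs_lt.mpr ⟨by linarith [hx.1], by linarith [hx.2]⟩)

theorem rabiFrequency_mul_period_mem_Ioo {ω b : ℝ} (hω : 0 < ω) (hb : b ≠ 0)
    (hb2 : b ^ 2 < 2 * ω ^ 2) :
    rabiFrequency ω b * (2 * π / ω) ∈ Set.Ioo π (3 * π) := by
  have hlow : ω / 2 < rabiFrequency ω b :=
    (Real.lt_sqrt (by positivity)).mpr (lt_add_of_pos_right _ (by positivity))
  have hhigh : rabiFrequency ω b < 3 * ω / 2 := (Real.sqrt_lt' (by positivity)).mpr (by nlinarith)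
  rw [mul_div_assoc', Set.mem_Ioo, lt_div_iff₀ hω, div_lt_iff₀ hω]
  constructor <;> nlinarith [Real.pi_pos]

theorem trace_rabiSolution_period_ne_two {ω b : ℝ} (hω : 0 < ω) (hb : b ≠ 0)
    (hb2 : b ^ 2 < 2 * ω ^ 2) : (rabiSolution ω b (2 * π / ω)).trace ≠ 2 := by
  rw [trace_rabiSolution_period ω b hω.ne']
  intro h
  have hcos : (Real.cos (rabiFrequency ω b * (2 * π / ω)) : ℂ) = -1 := by
    linear_combination -h / 2
  exact (Real.neg_one_lt_cos_of_mem_Ioo (rabiFrequency_mul_period_mem_Ioo hω hb hb2)).ne'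
    (by exact_mod_cast hcos)

theorem Matrix.norm_two_sub_trace_le_sq {M : Matrix (Fin 2) (Fin 2) ℂ} (hM : M.det = 1) {y : ℝ}
    (hy : cexp (I * y) ∈ spectrum ℂ M) : ‖2 - M.trace‖ ≤ y ^ 2 := by
  have htr : M.trace = 2 * Real.cos y := by
    rw [M.trace_eq_add_inv_of_mem_spectrum hM hy, ← Complex.exp_neg, Complex.ofReal_cos,
      Complex.two_cos, mul_comm, neg_mul]
  rw [htr, ← Complex.ofReal_ofNat, ← Complex.ofReal_mul, ← Complex.ofReal_sub, Complex.norm_real,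
    Real.norm_eq_abs, abs_of_nonneg (by linarith [Real.cos_le_one y])]
  linarith [Real.one_sub_sq_div_two_le_cos (x := y)]

/-- **Floquet-multiplier gap for the forced Dirac system at small momenta**
(Proposition 3.4, Fourier-side form): if `R v_D ≠ 0` and `R²v_D² < 2ω²`, then there exist
`d₀ > 0` and `g > 0` such that for every `ξ` with `‖ξ‖ ≤ d₀`, the spectrum of the
monodromy matrix `U(T_per)` contains no point of the arc `{e^{iy} : |y| ≤ g}`. -/
theorem floquet_multiplier_gap
    (ω R vD : ℝ) (hω : 0 < ω) (hRvD : R * vD ≠ 0) (hsmall : R ^ 2 * vD ^ 2 < 2 * ω ^ 2)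
    (Tper : ℝ) (hTper : Tper = 2 * Real.pi / ω) :
    ∃ d₀ > (0 : ℝ), ∃ g > (0 : ℝ),
      ∀ ξ₁ ξ₂ : ℝ, Real.sqrt (ξ₁ ^ 2 + ξ₂ ^ 2) ≤ d₀ →
        ∀ U : ℝ → Matrix (Fin 2) (Fin 2) ℂ,
          IsFundamentalSolution (Dhat ω R vD ξ₁ ξ₂) U →
          ∀ y : ℝ, |y| ≤ g →
            Complex.exp (Complex.I * y) ∉ spectrum ℂ (U Tper) := by
  subst hTper
  set W := rabiSolution ω (vD * R)
  have hb : vD * R ≠ 0 := by rwa [mul_comm]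
  have hgap : 0 < ‖2 - (W (2 * π / ω)).trace‖ := norm_pos_iff.mpr <| sub_ne_zero.mpr
    (trace_rabiSolution_period_ne_two hω hb (by linear_combination hsmall)).symm
  set gap := ‖2 - (W (2 * π / ω)).trace‖
  obtain ⟨d₀, hd₀, hclose⟩ := exists_forall_norm_trace_sub_lt ω R vD (2 * π / ω) (by positivity)
    (isFundamentalSolution_rabiSolution ω R vD hω.ne') (half_pos hgap)
  refine ⟨d₀, hd₀, min 1 (gap / 2), by positivity, fun ξ₁ ξ₂ hξ U hU y hy hmem => ?_⟩
  have hmult := Matrix.norm_two_sub_trace_le_sq (hU.det_eq_one (trace_Dhat ω R vD ξ₁ ξ₂) _) hmem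
  have hy2 : y ^ 2 ≤ gap / 2 := by
    nlinarith [hy.trans (min_le_left _ _), hy.trans (min_le_right _ _), abs_nonneg y, sq_abs y]
  have := norm_sub_le_norm_sub_add_norm_sub (2 : ℂ) (U (2 * π / ω)).trace (W (2 * π / ω)).trace
  linarith [hclose ξ₁ ξ₂ hξ U hU]
end
end
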